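/- The language L of integer sequences satisfying v_i = v_0 + i for all i is not recognisable by any symbolic ω-automaton with finitely many states: for any deterministic-or-nondeterministic finite-state acceptor over the alphabet ℤ (with arbitrary, possibly infinite edge predicates but finitely many states), its language cannot equal L. -/
import Mathlib


/-- An edge of a symbolic ω-automaton over alphabet ℤ: a guard may be an
arbitrary (possibly infinite) subset of ℤ. -/
structure SEdge (Q : Type) where
  src : Q
  guard : Set ℤ
  tgt : Q

/-- Emerson–Lei acceptance conditions. -/
inductive EL : Type where
  | tt | ff
  | fin (k : ℕ)
  | inf (k : ℕ)
  | and (a b : EL)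
  | or (a b : EL)

def ELSat {E : Type} (F : ℕ → Set E) (ρ : ℕ → E) : EL → Prop
  | .tt => True
  | .ff => False
  | .fin k => {i | ρ i ∈ F k}.Finite
  | .inf k => {i | ρ i ∈ F k}.Infinite
  | .and a b => ELSat F ρ a ∧ ELSat F ρ b
  | .or a b => ELSat F ρ a ∨ ELSat F ρ b

/-- A symbolic ω-automaton over alphabet ℤ with Emerson–Lei acceptance. -/
structure SA (Q : Type) where
  edges : Set (SEdge Q)
  init : Set Q
  F : ℕ → Set (SEdge Q)
  acc : EL

def IsRun {Q : Type} (A : SA Q) (a : ℕ → ℤ) (ρ : ℕ → SEdge Q) : Prop :=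
  (∀ i, ρ i ∈ A.edges) ∧
  (ρ 0).src ∈ A.init ∧
  (∀ i, (ρ i).tgt = (ρ (i+1)).src) ∧
  (∀ i, a i ∈ (ρ i).guard)

def Lang {Q : Type} (A : SA Q) : Set (ℕ → ℤ) :=
  { a | ∃ ρ, IsRun A a ρ ∧ ELSat A.F ρ A.acc }

lemma finite_congr {E : Type} (S : Set E) (ρ σ : ℕ → E)
    (h : ∀ i, i ≠ 0 → ρ i = σ i) :
    {i | ρ i ∈ S}.Finite → {i | σ i ∈ S}.Finite := by
  intro hf
  have hsub : {i | σ i ∈ S} ⊆ {i | ρ i ∈ S} ∪ {0} := by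
    intro i hi
    by_cases h0 : i = 0
    · exact Or.inr h0
    · exact Or.inl (by simpa [h i h0] using hi)
  exact (hf.union (Set.finite_singleton 0)).subset hsub

lemma elsat_congr {E : Type} (F : ℕ → Set E) (ρ σ : ℕ → E)
    (h : ∀ i, i ≠ 0 → ρ i = σ i) (e : EL) :
    ELSat F ρ e ↔ ELSat F σ e := by
  have h' : ∀ i, i ≠ 0 → σ i = ρ i := fun i hi => (h i hi).symm
  induction e with
  | tt => simp [ELSat]
  | ff => simp [ELSat]
  | fin k =>
    constructor
    · exact finite_congr (F k) ρ σ h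
    · exact finite_congr (F k) σ ρ h'
  | inf k =>
    constructor
    · intro hi hc
      exact hi (finite_congr (F k) σ ρ h' hc)
    · intro hi hc
      exact hi (finite_congr (F k) ρ σ h hc)
  | and a b iha ihb => exact and_congr iha ihb
  | or a b iha ihb => exact or_congr iha ihb

/-- No symbolic ω-automaton with finitely many states recognises
`L = { a : a_i = a_0 + i for all i }`. -/
theorem stmt7 (Q : Type) [Finite Q] (A : SA Q) :
    Lang A ≠ { a : ℕ → ℤ | ∀ i : ℕ, a i = a 0 + i } := by
  intro heq
  -- the word starting at n
  have hmem : ∀ n : ℤ, (fun i : ℕ => n + i) ∈ Lang A := by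
    intro n
    rw [heq]
    intro i; simp
  choose ρ hρ using hmem
  -- pigeonhole on the state at position 1
  obtain ⟨n, m, hne, hst⟩ :=
    Finite.exists_ne_map_eq_of_infinite (fun n : ℤ => (ρ n 1).src)
  -- spliced word and run
  set a : ℕ → ℤ := fun i => if i = 0 then n else m + i with ha
  set σ : ℕ → SEdge Q := fun i => if i = 0 then ρ n 0 else ρ m i with hσ
  obtain ⟨hne_n, hinit_n, hcons_n, hg_n⟩ := (hρ n).1
  obtain ⟨hne_m, hinit_m, hcons_m, hg_m⟩ := (hρ m).1
  have hrun : IsRun A a σ := by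
    refine ⟨fun i => ?_, by simpa [hσ] using hinit_n, fun i => ?_, fun i => ?_⟩
    · by_cases h0 : i = 0 <;> simp [hσ, h0, hne_n 0, hne_m i]
    · match i with
      | 0 => simpa [hσ] using (hcons_n 0).trans hst
      | (j+1) => simpa [hσ] using hcons_m (j+1)
    · by_cases h0 : i = 0
      · simpa [ha, hσ, h0] using hg_n 0
      · simpa [ha, hσ, h0] using hg_m i
  have hacc : ELSat A.F σ A.acc := by
    rw [← elsat_congr A.F (ρ m) σ (fun i hi => by simp [hσ, hi]) A.acc]
    exact (hρ m).2
  have haL : a ∈ Lang A := ⟨σ, hrun, hacc⟩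
  rw [heq] at haL
  have h1 := haL 1
  simp [ha] at h1
  exact hne (by linarith)
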